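/- Under the same setup (X = ∑ w_k Z_k² with summable nonincreasing positive weights and independent standard normals Z_k), lim_{x→∞} x^{−1} log P(X > x) = −1/(2w_1). -/

import Mathlib

open MeasureTheory ProbabilityTheory Filter Topology

open scoped ENNReal NNReal Real

namespace TailAux

lemma gauss_withDensity : gaussianReal 0 1 =
    volume.withDensity (fun x => ((gaussianPDFReal 0 1 x).toNNReal : ℝ≥0∞)) := by
  rw [gaussianReal_of_var_ne_zero 0 one_ne_zero]; rfl

lemma pdf_smul_eq {c : ℝ} : (fun x : ℝ => (gaussianPDFReal 0 1 x).toNNReal • Real.exp (c * x^2))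
    = fun x => (Real.sqrt (2*π))⁻¹ * Real.exp (-(1/2 - c) * x^2) := by
  funext x
  rw [NNReal.smul_def, Real.coe_toNNReal _ (gaussianPDFReal_nonneg 0 1 x)]
  rw [gaussianPDFReal, smul_eq_mul]
  push_cast
  rw [mul_assoc, ← Real.exp_add]
  ring_nf

lemma meas_pdf : Measurable (fun x : ℝ => (gaussianPDFReal 0 1 x).toNNReal) :=
  (measurable_gaussianPDFReal 0 1).real_toNNReal

lemma gauss_exp_sq_integrable {c : ℝ} (hc : c < 1/2) :
    Integrable (fun z => Real.exp (c * z^2)) (gaussianReal 0 1) := by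
  rw [gauss_withDensity,
    integrable_withDensity_iff_integrable_smul meas_pdf, pdf_smul_eq]
  exact (integrable_exp_neg_mul_sq (by linarith)).const_mul _

lemma gauss_exp_sq_integral {c : ℝ} (hc : c < 1/2) :
    ∫ z, Real.exp (c * z^2) ∂(gaussianReal 0 1) = (Real.sqrt (1 - 2*c))⁻¹ := by
  rw [gauss_withDensity, integral_withDensity_eq_integral_smul meas_pdf]
  rw [show (fun x : ℝ => (gaussianPDFReal 0 1 x).toNNReal • Real.exp (c * x^2))
    = fun x => (Real.sqrt (2*π))⁻¹ * Real.exp (-(1/2 - c) * x^2) from pdf_smul_eq]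
  rw [MeasureTheory.integral_const_mul, integral_gaussian]
  rw [← Real.sqrt_inv, ← Real.sqrt_mul (by positivity), ← Real.sqrt_inv]
  congr 1
  have hπ := Real.pi_pos
  rw [eq_comm, inv_eq_iff_eq_inv, div_eq_mul_inv]
  field_simp

variable {Ω : Type*} [MeasurableSpace Ω] {μ : Measure Ω}

lemma mgf_term {Z : Ω → ℝ} (hZ : Measurable Z) (hlaw : μ.map Z = gaussianReal 0 1)
    {t w : ℝ} (h : t * w < 1/2) :
    mgf (fun ω => w * Z ω ^ 2) μ t = (Real.sqrt (1 - 2*(t*w)))⁻¹ := by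
  have hcont : Continuous (fun z : ℝ => Real.exp (t * (w * z ^ 2))) := by fun_prop
  have := integral_map (μ := μ) hZ.aemeasurable hcont.aestronglyMeasurable
  rw [hlaw] at this
  rw [mgf, ← this]
  simp_rw [show ∀ z : ℝ, t * (w * z ^ 2) = (t*w) * z^2 by intro z; ring]
  exact gauss_exp_sq_integral h

lemma int_term {Z : Ω → ℝ} (hZ : Measurable Z) (hlaw : μ.map Z = gaussianReal 0 1)
    {t w : ℝ} (h : t * w < 1/2) :
    Integrable (fun ω => Real.exp (t * (w * Z ω ^ 2))) μ := by
  have hcont : Continuous (fun z : ℝ => Real.exp (t * (w * z ^ 2))) := by fun_prop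
  have := (integrable_map_measure (μ := μ) (f := Z)
    hcont.aestronglyMeasurable hZ.aemeasurable)
  rw [hlaw] at this
  have h2 : Integrable (fun z : ℝ => Real.exp (t * (w * z ^ 2))) (gaussianReal 0 1) := by
    simp_rw [show ∀ z : ℝ, t * (w * z ^ 2) = (t*w) * z^2 by intro z; ring]
    exact gauss_exp_sq_integrable h
  exact this.mp h2

lemma sqrt_one_sub_inv_le {s r : ℝ} (h0 : 0 ≤ s) (hsr : s ≤ r) (hr : r < 1) :
    (Real.sqrt (1 - s))⁻¹ ≤ Real.exp (s / (1 - r)) := by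
  have h1 : 0 < 1 - s := by linarith
  have h2 : 0 < 1 - r := by linarith
  have hinv : (1 - s) * (1 - s)⁻¹ = 1 := mul_inv_cancel₀ h1.ne'
  have key : (1 - s)⁻¹ ≤ 1 + s / (1 - r) := by
    rw [inv_le_iff_one_le_mul₀ h1]
    have : s / (1-r) * (1-r) = s := div_mul_cancel₀ _ h2.ne'
    nlinarith [div_nonneg h0 h2.le]
  have hone : (1:ℝ) ≤ (1 - s)⁻¹ := by
    rw [le_inv_comm₀ one_pos h1]; simpa using h0
  calc (Real.sqrt (1 - s))⁻¹ = Real.sqrt ((1 - s)⁻¹) := (Real.sqrt_inv _).symm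
    _ ≤ Real.sqrt (((1 - s)⁻¹)^2) := Real.sqrt_le_sqrt (by nlinarith)
    _ = (1 - s)⁻¹ := Real.sqrt_sq (by positivity)
    _ ≤ 1 + s / (1 - r) := key
    _ ≤ Real.exp (s / (1 - r)) := by
        rw [add_comm]; exact Real.add_one_le_exp _

lemma log_pdf (y : ℝ) :
    Real.log (gaussianPDFReal 0 1 y) = -(y^2/2) - Real.log (Real.sqrt (2*π)) := by
  rw [gaussianPDFReal]
  push_cast
  rw [Real.log_mul (by positivity) (Real.exp_ne_zero _), Real.log_inv, Real.log_exp]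
  ring

end TailAux

open TailAux

theorem tail_asymptotic_weighted_chi_square
    {Ω : Type*} [MeasurableSpace Ω] (μ : Measure Ω) [IsProbabilityMeasure μ]
    (Z : ℕ → Ω → ℝ) (hmeas : ∀ k, Measurable (Z k))
    (hindep : iIndepFun Z μ)
    (hlaw : ∀ k, μ.map (Z k) = gaussianReal 0 1)
    (w : ℕ → ℝ) (hpos : ∀ k, 0 < w k) (hanti : Antitone w) (hsum : Summable w) :
    Tendsto (fun x : ℝ =>
        Real.log (μ {ω | x < ∑' k, w k * (Z k ω) ^ 2}).toReal / x)
      atTop (𝓝 (-(1 / (2 * w 0)))) := by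
  have hw0 : 0 < w 0 := hpos 0
  set L : ℝ := -(1 / (2 * w 0)) with hL
  set Y : ℕ → Ω → ℝ := fun k ω => w k * Z k ω ^ 2 with hYdef
  have hYmeas : ∀ k, Measurable (Y k) := fun k =>
    measurable_const.mul ((hmeas k).pow_const 2)
  have hYnn : ∀ k ω, 0 ≤ Y k ω := fun k ω => mul_nonneg (hpos k).le (sq_nonneg _)
  have hYindep : iIndepFun Y μ :=
    hindep.comp (fun k z => w k * z ^ 2) (fun k => by fun_prop)
  -- half-condition transfer
  have hhalf : ∀ {t : ℝ}, 0 < t → t * w 0 < 1/2 → ∀ k, t * w k < 1/2 := by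
    intro t ht h k
    exact lt_of_le_of_lt (mul_le_mul_of_nonneg_left (hanti (Nat.zero_le k)) ht.le) h
  -- integrability of exp of partial sums
  have hint : ∀ {t : ℝ}, 0 < t → t * w 0 < 1/2 → ∀ n,
      Integrable (fun ω => Real.exp (t * (∑ i ∈ Finset.range n, Y i) ω)) μ := by
    intro t ht h n
    exact iIndepFun.integrable_exp_mul_sum hYindep hYmeas
      (fun i _ => int_term (hmeas i) (hlaw i) (hhalf ht h i))
  -- mgf bound for partial sums
  have hmgf : ∀ {t : ℝ}, 0 < t → t * w 0 < 1/2 → ∀ n,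
      mgf (∑ i ∈ Finset.range n, Y i) μ t
        ≤ Real.exp (2*t/(1 - 2*(t*w 0)) * ∑' k, w k) := by
    intro t ht h n
    rw [iIndepFun.mgf_sum hYindep hYmeas]
    have heq : ∀ i, mgf (Y i) μ t = (Real.sqrt (1 - 2*(t * w i)))⁻¹ := fun i =>
      mgf_term (hmeas i) (hlaw i) (hhalf ht h i)
    calc ∏ i ∈ Finset.range n, mgf (Y i) μ t
        ≤ ∏ i ∈ Finset.range n, Real.exp (2*(t*w i) / (1 - 2*(t*w 0))) := by
          refine Finset.prod_le_prod (fun i _ => ?_) (fun i _ => ?_)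
          · rw [heq i]; positivity
          · rw [heq i]
            exact sqrt_one_sub_inv_le (by nlinarith [mul_pos ht (hpos i)])
              (by nlinarith [mul_le_mul_of_nonneg_left (hanti (Nat.zero_le i)) ht.le])
              (by linarith)
      _ = Real.exp (∑ i ∈ Finset.range n, 2*(t*w i) / (1 - 2*(t*w 0))) := by
          rw [Real.exp_sum]
      _ ≤ Real.exp (2*t/(1 - 2*(t*w 0)) * ∑' k, w k) := by
          apply Real.exp_le_exp.mpr
          have : ∀ i, 2*(t*w i) / (1 - 2*(t*w 0)) = (2*t/(1 - 2*(t*w 0))) * w i := by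
            intro i; ring
          simp_rw [this]
          rw [← Finset.mul_sum]
          have hsle : ∑ i ∈ Finset.range n, w i ≤ ∑' k, w k :=
            Summable.sum_le_tsum _ (fun i _ => (hpos i).le) hsum
          have hc : 0 ≤ 2*t/(1 - 2*(t*w 0)) := by
            apply div_nonneg (by linarith) (by linarith)
          exact mul_le_mul_of_nonneg_left hsle hc
  -- a.s. summability
  have hsummable : ∀ᵐ ω ∂μ, Summable (fun k => Y k ω) := by
    set t0 : ℝ := 1/(4 * w 0) with ht0def
    have ht0 : 0 < t0 := by positivity
    have hh0 : t0 * w 0 < 1/2 := by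
      rw [ht0def, div_mul_eq_mul_div, one_mul, div_lt_iff₀ (by positivity)]
      nlinarith
    set C : ℝ := Real.exp (2*t0/(1 - 2*(t0*w 0)) * ∑' k, w k) with hCdef
    set g : ℕ → Ω → ℝ≥0∞ := fun n ω =>
      ENNReal.ofReal (Real.exp (t0 * (∑ i ∈ Finset.range n, Y i) ω)) with hgdef
    have hgmeas : ∀ n, Measurable (g n) := by
      intro n
      apply ENNReal.measurable_ofReal.comp
      apply Real.measurable_exp.comp
      apply Measurable.const_mul
      rw [show (∑ i ∈ Finset.range n, Y i) = fun ω => ∑ i ∈ Finset.range n, Y i ω by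
        funext ω; exact Finset.sum_apply ω (Finset.range n) Y]
      exact Finset.measurable_sum _ (fun i _ => hYmeas i)
    have hgmono : Monotone g := by
      intro n m hnm ω
      apply ENNReal.ofReal_le_ofReal
      apply Real.exp_le_exp.mpr
      apply mul_le_mul_of_nonneg_left ?_ ht0.le
      simp only [Finset.sum_apply]
      exact Finset.sum_le_sum_of_subset_of_nonneg (Finset.range_subset_range.mpr hnm)
        (fun i _ _ => hYnn i ω)
    have hbound : ∀ n, ∫⁻ ω, g n ω ∂μ ≤ ENNReal.ofReal C := by
      intro n
      rw [hgdef]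
      rw [← ofReal_integral_eq_lintegral_ofReal (hint ht0 hh0 n)
        (Filter.Eventually.of_forall fun ω => (Real.exp_pos _).le)]
      exact ENNReal.ofReal_le_ofReal (hmgf ht0 hh0 n)
    have hlim : ∫⁻ ω, ⨆ n, g n ω ∂μ ≤ ENNReal.ofReal C := by
      rw [lintegral_iSup hgmeas (fun n m h ω => hgmono h ω)]
      exact iSup_le hbound
    have hfin : ∀ᵐ ω ∂μ, (⨆ n, g n ω) < ∞ :=
      ae_lt_top (Measurable.iSup hgmeas) (lt_of_le_of_lt hlim ENNReal.ofReal_lt_top).ne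
    filter_upwards [hfin] with ω hω
    apply summable_of_sum_range_le (c := Real.log ((⨆ n, g n ω).toReal) / t0)
      (fun n => hYnn n ω)
    intro n
    have h1 : g n ω ≤ ⨆ m, g m ω := le_iSup (fun m => g m ω) n
    have h2 : Real.exp (t0 * ∑ i ∈ Finset.range n, Y i ω) ≤ (⨆ m, g m ω).toReal := by
      rw [← ENNReal.ofReal_le_iff_le_toReal hω.ne]
      simpa [hgdef, Finset.sum_apply] using h1
    have hTpos : 0 < (⨆ m, g m ω).toReal := lt_of_lt_of_le (Real.exp_pos _) h2
    have h3 : t0 * ∑ i ∈ Finset.range n, Y i ω ≤ Real.log ((⨆ m, g m ω).toReal) :=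
      (Real.le_log_iff_exp_le hTpos).mpr h2
    rw [le_div_iff₀ ht0]
    linarith [h3, mul_comm t0 (∑ i ∈ Finset.range n, Y i ω)]
  -- upper tail bound
  have hupper : ∀ {t : ℝ}, 0 < t → t * w 0 < 1/2 → ∀ x : ℝ,
      (μ {ω | x < ∑' k, Y k ω}).toReal
        ≤ Real.exp (-t*x) * Real.exp (2*t/(1 - 2*(t*w 0)) * ∑' k, w k) := by
    intro t ht hh x
    set C : ℝ := Real.exp (2*t/(1 - 2*(t*w 0)) * ∑' k, w k) with hCdef
    have hsub : {ω | x < ∑' k, Y k ω} ⊆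
        {ω | ¬ Summable (fun k => Y k ω)}
          ∪ ⋃ n, {ω | x ≤ (∑ i ∈ Finset.range n, Y i) ω} := by
      intro ω hx
      by_cases hs : Summable (fun k => Y k ω)
      · right
        have hten := hs.hasSum.tendsto_sum_nat
        have hev : ∀ᶠ n in atTop, x < ∑ i ∈ Finset.range n, Y i ω :=
          hten.eventually (eventually_gt_nhds hx)
        obtain ⟨n, hn⟩ := hev.exists
        refine Set.mem_iUnion.mpr ⟨n, ?_⟩
        simp only [Set.mem_setOf_eq, Finset.sum_apply]
        exact hn.le
      · left; exact hs
    have hnull : μ {ω | ¬ Summable (fun k => Y k ω)} = 0 := ae_iff.mp hsummable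
    have hUn : ∀ n, μ {ω | x ≤ (∑ i ∈ Finset.range n, Y i) ω}
        ≤ ENNReal.ofReal (Real.exp (-t*x) * C) := by
      intro n
      rw [ENNReal.le_ofReal_iff_toReal_le (measure_ne_top μ _) (by positivity)]
      calc (μ {ω | x ≤ (∑ i ∈ Finset.range n, Y i) ω}).toReal
          ≤ Real.exp (-t*x) * mgf (∑ i ∈ Finset.range n, Y i) μ t :=
            measure_ge_le_exp_mul_mgf x ht.le (hint ht hh n)
        _ ≤ Real.exp (-t*x) * C :=
            mul_le_mul_of_nonneg_left (hmgf ht hh n) (Real.exp_pos _).le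
    have hmono : Monotone (fun n => {ω | x ≤ (∑ i ∈ Finset.range n, Y i) ω}) := by
      intro n m hnm ω hω
      simp only [Set.mem_setOf_eq, Finset.sum_apply] at *
      exact le_trans hω (Finset.sum_le_sum_of_subset_of_nonneg
        (Finset.range_subset_range.mpr hnm) (fun i _ _ => hYnn i ω))
    have hUnion : μ (⋃ n, {ω | x ≤ (∑ i ∈ Finset.range n, Y i) ω})
        ≤ ENNReal.ofReal (Real.exp (-t*x) * C) := by
      rw [(hmono.directed_le).measure_iUnion]
      exact iSup_le hUn
    have htotal : μ {ω | x < ∑' k, Y k ω} ≤ ENNReal.ofReal (Real.exp (-t*x) * C) := by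
      calc μ {ω | x < ∑' k, Y k ω}
          ≤ μ ({ω | ¬ Summable (fun k => Y k ω)}
              ∪ ⋃ n, {ω | x ≤ (∑ i ∈ Finset.range n, Y i) ω}) := measure_mono hsub
        _ ≤ μ {ω | ¬ Summable (fun k => Y k ω)}
              + μ (⋃ n, {ω | x ≤ (∑ i ∈ Finset.range n, Y i) ω}) := measure_union_le _ _
        _ = μ (⋃ n, {ω | x ≤ (∑ i ∈ Finset.range n, Y i) ω}) := by rw [hnull, zero_add]
        _ ≤ ENNReal.ofReal (Real.exp (-t*x) * C) := hUnion
    exact ENNReal.toReal_le_of_le_ofReal (by positivity) htotal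
  -- lower bound
  have hlower : ∀ x : ℝ, 0 ≤ x →
      ENNReal.ofReal (gaussianPDFReal 0 1 (Real.sqrt (x / w 0) + 1))
        ≤ μ {ω | x < ∑' k, Y k ω} := by
    intro x hx
    set u : ℝ := Real.sqrt (x / w 0) with hu
    have hu0 : 0 ≤ u := Real.sqrt_nonneg _
    have husq : u^2 = x / w 0 := Real.sq_sqrt (div_nonneg hx hw0.le)
    have hstep1 : ENNReal.ofReal (gaussianPDFReal 0 1 (u + 1))
        ≤ gaussianReal 0 1 {z : ℝ | x < w 0 * z^2} := by
      have hsub : Set.Ioo u (u+1) ⊆ {z : ℝ | x < w 0 * z^2} := by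
        intro z hz
        have hz1 : u < z := hz.1
        have hz0 : 0 ≤ z := le_trans hu0 hz1.le
        have hlt : u^2 < z^2 := by nlinarith
        have hlt2 : x / w 0 < z^2 := husq ▸ hlt
        have := (div_lt_iff₀ hw0).mp hlt2
        simp only [Set.mem_setOf_eq]
        nlinarith
      calc ENNReal.ofReal (gaussianPDFReal 0 1 (u + 1))
          = ENNReal.ofReal (gaussianPDFReal 0 1 (u + 1)) * volume (Set.Ioo u (u+1)) := by
            rw [Real.volume_Ioo]
            norm_num
        _ = ∫⁻ z in Set.Ioo u (u+1), ENNReal.ofReal (gaussianPDFReal 0 1 (u + 1)) ∂volume := by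
            rw [MeasureTheory.setLIntegral_const]
        _ ≤ ∫⁻ z in Set.Ioo u (u+1), gaussianPDF 0 1 z ∂volume := by
            apply setLIntegral_mono (measurable_gaussianPDF 0 1)
            intro z hz
            apply ENNReal.ofReal_le_ofReal
            rw [gaussianPDFReal, gaussianPDFReal]
            push_cast
            have hz0 : 0 ≤ z := le_trans hu0 hz.1.le
            have : z^2 ≤ (u+1)^2 := by nlinarith [hz.2]
            apply mul_le_mul_of_nonneg_left ?_ (by positivity)
            apply Real.exp_le_exp.mpr
            nlinarith
        _ ≤ ∫⁻ z in {z : ℝ | x < w 0 * z^2}, gaussianPDF 0 1 z ∂volume :=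
            lintegral_mono_set hsub
        _ = gaussianReal 0 1 {z : ℝ | x < w 0 * z^2} :=
            (gaussianReal_apply 0 one_ne_zero _).symm
    have hstep2 : gaussianReal 0 1 {z : ℝ | x < w 0 * z^2}
        = μ {ω | x < Y 0 ω} := by
      rw [← hlaw 0, Measure.map_apply (hmeas 0)
        (measurableSet_lt measurable_const (by fun_prop))]
      rfl
    have hstep3 : μ {ω | x < Y 0 ω} ≤ μ {ω | x < ∑' k, Y k ω} := by
      have hsub : {ω | x < Y 0 ω} ⊆
          {ω | x < ∑' k, Y k ω} ∪ {ω | ¬ Summable (fun k => Y k ω)} := by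
        intro ω hω
        by_cases hs : Summable (fun k => Y k ω)
        · left
          exact lt_of_lt_of_le hω (Summable.le_tsum hs 0 (fun j _ => hYnn j ω))
        · right; exact hs
      calc μ {ω | x < Y 0 ω}
          ≤ μ ({ω | x < ∑' k, Y k ω} ∪ {ω | ¬ Summable (fun k => Y k ω)}) :=
            measure_mono hsub
        _ ≤ μ {ω | x < ∑' k, Y k ω} + μ {ω | ¬ Summable (fun k => Y k ω)} :=
            measure_union_le _ _
        _ = μ {ω | x < ∑' k, Y k ω} := by rw [ae_iff.mp hsummable, add_zero]
    exact le_trans hstep1 (le_of_eq hstep2 |>.trans hstep3)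
  -- positivity of probability and real lower bound
  have hPpos : ∀ x : ℝ, 0 ≤ x →
      gaussianPDFReal 0 1 (Real.sqrt (x / w 0) + 1)
        ≤ (μ {ω | x < ∑' k, Y k ω}).toReal := by
    intro x hx
    have := ENNReal.toReal_mono (measure_ne_top μ _) (hlower x hx)
    rwa [ENNReal.toReal_ofReal (gaussianPDFReal_nonneg 0 1 _)] at this
  -- limit of the lower bound function
  have hg : Tendsto (fun x : ℝ =>
      Real.log (gaussianPDFReal 0 1 (Real.sqrt (x / w 0) + 1)) / x) atTop (𝓝 L) := by
    have hsq : Tendsto (fun x : ℝ => Real.sqrt x) atTop atTop := by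
      simpa [Real.sqrt_eq_rpow] using tendsto_rpow_atTop (by norm_num : (0:ℝ) < 1/2)
    have h1 : Tendsto (fun x : ℝ => (Real.sqrt x)⁻¹) atTop (𝓝 0) := hsq.inv_tendsto_atTop
    have h2 : Tendsto (fun x : ℝ => x⁻¹) atTop (𝓝 0) := tendsto_inv_atTop_zero
    have hc : Tendsto (fun x : ℝ => L - (Real.sqrt (w 0))⁻¹ * (Real.sqrt x)⁻¹
        - (1/2 + Real.log (Real.sqrt (2*π))) * x⁻¹) atTop (𝓝 L) := by
      have := (tendsto_const_nhds (α := ℝ) (x := L) (f := atTop)).sub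
        ((h1.const_mul ((Real.sqrt (w 0))⁻¹)).sub
          (h2.const_mul (1/2 + Real.log (Real.sqrt (2*π)))).neg)
      simpa [sub_sub] using this
    apply hc.congr'
    filter_upwards [eventually_gt_atTop 0] with x hx
    rw [log_pdf]
    have hx0 : x ≠ 0 := hx.ne'
    set a : ℝ := Real.sqrt x with ha
    set b : ℝ := Real.sqrt (w 0) with hb
    have hsx : a * a = x := Real.mul_self_sqrt hx.le
    have hsw : b * b = w 0 := Real.mul_self_sqrt hw0.le
    have ha0 : a ≠ 0 := by rw [ha]; positivity
    have hb0 : b ≠ 0 := by rw [hb]; positivity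
    have hdiv : Real.sqrt (x / w 0) = a / b := Real.sqrt_div' x hw0.le
    rw [hdiv, hL, ← hsx, ← hsw]
    field_simp
    ring
  -- assembly
  rw [Metric.tendsto_nhds]
  intro ε hε
  have hlowev : ∀ᶠ x in atTop,
      L - ε < Real.log (μ {ω | x < ∑' k, Y k ω}).toReal / x := by
    have h1 : ∀ᶠ x in atTop,
        L - ε < Real.log (gaussianPDFReal 0 1 (Real.sqrt (x / w 0) + 1)) / x :=
      hg.eventually (eventually_gt_nhds (by linarith))
    filter_upwards [h1, eventually_gt_atTop 0] with x hx1 hx2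
    refine lt_of_lt_of_le hx1 ?_
    have hple := hPpos x hx2.le
    have hpdfpos : 0 < gaussianPDFReal 0 1 (Real.sqrt (x / w 0) + 1) :=
      gaussianPDFReal_pos 0 1 _ one_ne_zero
    have hlog := Real.log_le_log hpdfpos hple
    gcongr
  -- choose t
  set δ : ℝ := min (ε/2) (1/(4 * w 0)) with hδdef
  have hδ : 0 < δ := lt_min (by linarith) (by positivity)
  have hδle : δ ≤ ε/2 := min_le_left _ _
  have hδle2 : δ ≤ 1/(4 * w 0) := min_le_right _ _
  set t : ℝ := 1/(2 * w 0) - δ with htdef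
  have he1 : 1/(2*w 0) - 1/(4*w 0) = 1/(4*w 0) := by field_simp; ring
  have htpos : 0 < t := by
    rw [htdef]
    have : (0:ℝ) < 1/(4*w 0) := by positivity
    linarith
  have hth : t * w 0 < 1/2 := by
    have h1 : t < 1/(2*w 0) := by rw [htdef]; linarith
    calc t * w 0 < (1/(2*w 0)) * w 0 := by nlinarith
      _ = 1/2 := by
          rw [div_mul_eq_mul_div, one_mul, div_eq_div_iff (by positivity) (by norm_num)]
          ring
  set C : ℝ := Real.exp (2*t/(1 - 2*(t*w 0)) * ∑' k, w k) with hCdef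
  have hCpos : 0 < C := Real.exp_pos _
  have huppev : ∀ᶠ x in atTop,
      Real.log (μ {ω | x < ∑' k, Y k ω}).toReal / x < L + ε := by
    have hLC : Tendsto (fun x : ℝ => Real.log C * x⁻¹) atTop (𝓝 0) := by
      simpa using tendsto_inv_atTop_zero.const_mul (Real.log C)
    have h2 : ∀ᶠ x in atTop, Real.log C * x⁻¹ < ε/2 :=
      hLC.eventually (eventually_lt_nhds (by linarith))
    filter_upwards [h2, eventually_gt_atTop 0] with x hx2 hxpos
    have hx0 : x ≠ 0 := hxpos.ne'
    have hPp : 0 < (μ {ω | x < ∑' k, Y k ω}).toReal :=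
      lt_of_lt_of_le (gaussianPDFReal_pos 0 1 _ one_ne_zero) (hPpos x hxpos.le)
    have hlog := Real.log_le_log hPp (hupper htpos hth x)
    have hlogeq : Real.log (Real.exp (-t*x) * C) = -t*x + Real.log C := by
      rw [Real.log_mul (Real.exp_ne_zero _) hCpos.ne', Real.log_exp]
    calc Real.log (μ {ω | x < ∑' k, Y k ω}).toReal / x
        ≤ (-t*x + Real.log C) / x := by rw [← hlogeq]; gcongr
      _ = -t + Real.log C * x⁻¹ := by field_simp
      _ < -t + ε/2 := by linarith
      _ = L + δ + ε/2 := by rw [htdef, hL]; ring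
      _ ≤ L + ε := by linarith
  filter_upwards [hlowev, huppev] with x h1 h2
  rw [Real.dist_eq, abs_sub_lt_iff]
  constructor <;> linarith
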